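/- Let d⊥ be the minimum Hamming distance of the dual of the code generated by the rows of G, and for i ∈ {1,...,k} let s_i be the number of columns of G that are nonzero scalar multiples of e_i. Then every (λ_1,...,λ_k) ∈ Λ(G) satisfies ∑_{i: s_i ≠ 0} ( min{s_i, λ_i} + max{2, d⊥ − 1}·max{0, λ_i − s_i} ) + ∑_{i: s_i = 0} 2·λ_i ≤ n. -/

import Mathlib

/-!
Count the load of an allocation `x` in two ways: summing the capacity constraint over all nodes
gives `∑ᵢ ∑_R |R| x i R ≤ n`. For a fixed object `i` with systematic nodes `Aᵢ`, the mass on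
recovery sets meeting `Aᵢ` is at most `sᵢ = |Aᵢ|` (those nodes have capacity `1` each), and every
other recovery set is large: it is not a singleton (a singleton recovery set is systematic), and if
`ν ∈ Aᵢ` then `R ∪ {ν}` supports the nonzero dual codeword `y - c⁻¹ e_ν`, where `G y = e_i` with
`y` supported on `R` and `G e_ν = c e_i`, so `d⊥ ≤ |R| + 1`. Putting the mass `min sᵢ λᵢ` on the
cheap sets and the rest on sets of size at least `max 2 (d⊥ - 1)` minimises the load.
-/

open Matrix

/-- The ν-th column of a matrix. -/
def matCol {F : Type} [Field F] {k n : ℕ} (G : Matrix (Fin k) (Fin n) F) (ν : Fin n) :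
    Fin k → F :=
  fun r => G r ν

/-- `R ⊆ {1,...,n}` is a recovery set for object `i` if `e_i` lies in the span of the
columns of `G` indexed by `R`. -/
def IsRecoverySet {F : Type} [Field F] {k n : ℕ} (G : Matrix (Fin k) (Fin n) F)
    (i : Fin k) (R : Finset (Fin n)) : Prop :=
  Pi.single i (1 : F) ∈ Submodule.span F (matCol G '' (R : Set (Fin n)))

/-- The service rate region `Λ(G)` of the system given by all recovery sets of `G`,
with server capacity `1`: the allocation `x i R` is required to vanish on non-recovery
sets, so all sums effectively range over the recovery sets of each object. -/
def SRRG {F : Type} [Field F] {k n : ℕ} (G : Matrix (Fin k) (Fin n) F) :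
    Set (Fin k → ℝ) :=
  {lam | ∃ x : Fin k → Finset (Fin n) → ℝ,
    (∀ i R, 0 ≤ x i R) ∧
    (∀ i R, ¬ IsRecoverySet G i R → x i R = 0) ∧
    (∀ i, ∑ R : Finset (Fin n), x i R = lam i) ∧
    (∀ ν : Fin n, ∑ i, ∑ R : Finset (Fin n), (if ν ∈ R then x i R else 0) ≤ 1)}

open Finset

section Allocation

variable {α : Type*} [Fintype α] [DecidableEq α]

lemma sum_card_inter_mul_eq (y : Finset α → ℝ) (S : Finset α) :
    ∑ R, (#(R ∩ S) : ℝ) * y R = ∑ ν ∈ S, ∑ R, if ν ∈ R then y R else 0 := by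
  rw [Finset.sum_comm]
  refine Finset.sum_congr rfl fun R _ => ?_
  rw [Finset.sum_ite_mem, Finset.sum_const, nsmul_eq_mul, Finset.inter_comm]

lemma sum_sum_card_mul_le_card {ι : Type*} [Fintype ι] (x : ι → Finset α → ℝ)
    (hcap : ∀ ν, ∑ i, ∑ R, (if ν ∈ R then x i R else 0) ≤ 1) :
    ∑ i, ∑ R, (#R : ℝ) * x i R ≤ Fintype.card α := by
  calc ∑ i, ∑ R, (#R : ℝ) * x i R
      = ∑ ν, ∑ i, ∑ R, (if ν ∈ R then x i R else 0) := by
        have h i := sum_card_inter_mul_eq (x i) Finset.univ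
        simp only [Finset.inter_univ] at h
        rw [Finset.sum_congr rfl fun i _ => h i, Finset.sum_comm]
    _ ≤ ∑ _ν : α, (1 : ℝ) := Finset.sum_le_sum fun ν _ => hcap ν
    _ = Fintype.card α := by simp

lemma sum_ite_mem_le_one {ι : Type*} [Fintype ι] {x : ι → Finset α → ℝ}
    (hx : ∀ i R, 0 ≤ x i R) (hcap : ∀ ν, ∑ i, ∑ R, (if ν ∈ R then x i R else 0) ≤ 1)
    (i : ι) (ν : α) : ∑ R, (if ν ∈ R then x i R else 0) ≤ 1 :=
  (Finset.single_le_sum (fun j _ => Finset.sum_nonneg fun R _ => by split_ifs <;> simp [hx])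
    (Finset.mem_univ i)).trans (hcap ν)

lemma sum_not_disjoint_le_card {y : Finset α → ℝ} (hy : ∀ R, 0 ≤ y R) {A : Finset α}
    (hcap : ∀ ν ∈ A, ∑ R, (if ν ∈ R then y R else 0) ≤ 1) :
    ∑ R with ¬Disjoint R A, y R ≤ #A := by
  calc ∑ R with ¬Disjoint R A, y R
      ≤ ∑ R, (#(R ∩ A) : ℝ) * y R := by
        rw [Finset.sum_filter]
        refine Finset.sum_le_sum fun R _ => ?_
        split_ifs with h
        · exact mul_nonneg (Nat.cast_nonneg _) (hy R)
        · have : (1 : ℝ) ≤ #(R ∩ A) := by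
            exact_mod_cast (Finset.not_disjoint_iff_nonempty_inter.1 h).card_pos
          nlinarith [hy R]
    _ = ∑ ν ∈ A, ∑ R, if ν ∈ R then y R else 0 := sum_card_inter_mul_eq y A
    _ ≤ ∑ _ν ∈ A, (1 : ℝ) := Finset.sum_le_sum hcap
    _ = #A := by simp

lemma min_add_mul_max_le {a b s M : ℝ} (hb : 0 ≤ b) (has : a ≤ s) (hM : 1 ≤ M) :
    min s (a + b) + M * max 0 (a + b - s) ≤ a + M * b := by
  rcases le_total s (a + b) with h | h
  · rw [min_eq_left h, max_eq_right (by linarith)]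
    nlinarith
  · rw [min_eq_right h, max_eq_left (by linarith)]
    nlinarith

lemma min_add_mul_max_le_sum_card_mul {y : Finset α → ℝ} (hy : ∀ R, 0 ≤ y R) {A : Finset α}
    (hcap : ∀ ν ∈ A, ∑ R, (if ν ∈ R then y R else 0) ≤ 1) {M : ℝ} (hM : 1 ≤ M)
    (hlarge : ∀ R, y R ≠ 0 → Disjoint R A → M ≤ #R) :
    min (#A : ℝ) (∑ R, y R) + M * max 0 (∑ R, y R - #A) ≤ ∑ R, (#R : ℝ) * y R := by
  set a := ∑ R with ¬Disjoint R A, y R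
  set b := ∑ R with Disjoint R A, y R
  have hsum : ∑ R, y R = a + b := by
    rw [add_comm, Finset.sum_filter_add_sum_filter_not]
  have hload : M * b + a ≤ ∑ R, (#R : ℝ) * y R := by
    rw [← Finset.sum_filter_add_sum_filter_not _ (fun R => Disjoint R A), Finset.mul_sum]
    refine add_le_add (Finset.sum_le_sum fun R hR => ?_) (Finset.sum_le_sum fun R hR => ?_)
    · by_cases hyR : y R = 0
      · simp [hyR]
      · nlinarith [hy R, hlarge R hyR (Finset.mem_filter.1 hR).2]
    · have : (1 : ℝ) ≤ #R := by
        obtain ⟨ν, hν⟩ := Finset.not_disjoint_iff.1 (Finset.mem_filter.1 hR).2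
        exact_mod_cast Finset.card_pos.2 ⟨ν, hν.1⟩
      nlinarith [hy R]
  rw [hsum]
  exact (min_add_mul_max_le (Finset.sum_nonneg fun R _ => hy R)
    (sum_not_disjoint_le_card hy hcap) hM).trans ((add_comm _ _).trans_le hload)

end Allocation

section RecoverySets

variable {F : Type} [Field F] {k n : ℕ} {G : Matrix (Fin k) (Fin n) F}

def IsSystematic (G : Matrix (Fin k) (Fin n) F) (i : Fin k) (ν : Fin n) : Prop :=
  ∃ c : F, c ≠ 0 ∧ matCol G ν = c • (Pi.single i 1 : Fin k → F)

lemma mulVec_single_one_eq_matCol (ν : Fin n) : G *ᵥ Pi.single ν 1 = matCol G ν := by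
  rw [mulVec_single_one]
  rfl

namespace IsRecoverySet

variable {i : Fin k} {R : Finset (Fin n)}

lemma nonempty (h : IsRecoverySet G i R) : R.Nonempty := by
  rw [Finset.nonempty_iff_ne_empty]
  rintro rfl
  simp only [IsRecoverySet, coe_empty, Set.image_empty, Submodule.span_empty,
    Submodule.mem_bot] at h
  simpa using congrFun h i

lemma isSystematic_of_singleton {ν : Fin n} (h : IsRecoverySet G i {ν}) :
    IsSystematic G i ν := by
  rw [IsRecoverySet, Finset.coe_singleton, Set.image_singleton,
    Submodule.mem_span_singleton] at h
  obtain ⟨a, ha⟩ := h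
  have ha0 : a ≠ 0 := by
    rintro rfl
    simpa using congrFun ha i
  exact ⟨a⁻¹, inv_ne_zero ha0, by rw [← ha, smul_smul, inv_mul_cancel₀ ha0, one_smul]⟩

lemma two_le_card (h : IsRecoverySet G i R) (hR : ∀ ν ∈ R, ¬IsSystematic G i ν) :
    2 ≤ #R := by
  rcases Nat.lt_or_ge 1 #R with h1 | h1
  · exact h1
  · obtain ⟨ν, rfl⟩ := Finset.card_eq_one.1 (le_antisymm h1 h.nonempty.card_pos)
    exact absurd (isSystematic_of_singleton h) (hR ν (Finset.mem_singleton_self ν))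

lemma exists_mulVec_eq_single (h : IsRecoverySet G i R) :
    ∃ y : Fin n → F, (∀ ν ∉ R, y ν = 0) ∧ G *ᵥ y = Pi.single i 1 := by
  obtain ⟨l, hl, hGl⟩ := (Finsupp.mem_span_image_iff_linearCombination F).1 h
  refine ⟨l, fun ν hν => Finsupp.notMem_support_iff.1 fun h' => hν (hl h'), ?_⟩
  rw [← hGl]
  ext r
  simp [Finsupp.linearCombination_apply, Finsupp.sum_fintype, mulVec, dotProduct, matCol,
    mul_comm]

lemma exists_mulVec_eq_zero [DecidableEq F] (h : IsRecoverySet G i R) {ν₀ : Fin n}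
    (hν₀ : IsSystematic G i ν₀) (hν₀R : ν₀ ∉ R) :
    ∃ z : Fin n → F, z ≠ 0 ∧ G *ᵥ z = 0 ∧ hammingNorm z ≤ #R + 1 := by
  obtain ⟨c, hc, hcol⟩ := hν₀
  obtain ⟨y, hyR, hGy⟩ := h.exists_mulVec_eq_single
  refine ⟨y - c⁻¹ • Pi.single ν₀ 1, fun hz => ?_, ?_, ?_⟩
  · simpa [hyR ν₀ hν₀R, hc] using congrFun hz ν₀
  · rw [mulVec_sub, mulVec_smul, mulVec_single_one_eq_matCol, hcol, hGy, smul_smul,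
      inv_mul_cancel₀ hc, one_smul, sub_self]
  · calc hammingNorm (y - c⁻¹ • Pi.single ν₀ 1) ≤ #(insert ν₀ R) := by
          refine Finset.card_le_card fun ν hν => ?_
          rw [Finset.mem_insert]
          by_contra hνR
          rw [not_or] at hνR
          simp [hyR ν hνR.2, Pi.single_eq_of_ne hνR.1] at hν
      _ = #R + 1 := Finset.card_insert_of_notMem hν₀R

lemma le_card_add_one [DecidableEq F] {d : ℕ}
    (hd : d ∈ lowerBounds {w : ℕ | ∃ x : Fin n → F, x ≠ 0 ∧
      (∀ u : Fin k → F, ∑ ν, x ν * (u ᵥ* G) ν = 0) ∧ w = hammingNorm x})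
    (h : IsRecoverySet G i R) {ν₀ : Fin n} (hν₀ : IsSystematic G i ν₀) (hν₀R : ν₀ ∉ R) :
    d ≤ #R + 1 := by
  obtain ⟨z, hz, hGz, hzR⟩ := h.exists_mulVec_eq_zero hν₀ hν₀R
  refine (hd ⟨z, hz, fun u => ?_, rfl⟩).trans hzR
  change z ⬝ᵥ (u ᵥ* G) = 0
  rw [dotProduct_comm, ← dotProduct_mulVec, hGz, dotProduct_zero]

end IsRecoverySet

end RecoverySets

theorem stmt14_general {F : Type} [Field F] [DecidableEq F] {k n : ℕ}
    (G : Matrix (Fin k) (Fin n) F)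
    -- `s i` is the number of systematic nodes for object `i`
    (s : Fin k → ℕ)
    (hs : ∀ i, s i = Nat.card {ν : Fin n // ∃ c : F, c ≠ 0 ∧
      matCol G ν = c • (Pi.single i 1 : Fin k → F)})
    -- `dperp` is the minimum Hamming distance of the dual of the code generated by `G`
    (dperp : ℕ)
    (hdperp : IsLeast {w : ℕ | ∃ x : Fin n → F, x ≠ 0 ∧
      (∀ u : Fin k → F, ∑ ν, x ν * (u ᵥ* G) ν = 0) ∧ w = hammingNorm x} dperp) :
    ∀ lam ∈ SRRG G,
      ∑ i, (if s i = 0 then 2 * lam i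
        else min (s i : ℝ) (lam i) +
          max 2 ((dperp : ℝ) - 1) * max 0 (lam i - (s i : ℝ))) ≤ (n : ℝ) := by
  classical
  rintro lam ⟨x, hx0, hxrec, hxsum, hxcap⟩
  refine (Finset.sum_le_sum fun i _ => ?_).trans
    ((sum_sum_card_mul_le_card x hxcap).trans_eq (by rw [Fintype.card_fin]))
  set A : Finset (Fin n) := {ν | IsSystematic G i ν}
  have hsA : s i = #A := by
    rw [hs i, Nat.card_eq_fintype_card, Fintype.card_subtype]
    rfl
  have hcap ν (_ : ν ∈ A) := sum_ite_mem_le_one hx0 hxcap i ν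
  have hrec : ∀ R, x i R ≠ 0 → IsRecoverySet G i R := fun R hR => by_contra (hR ∘ hxrec i R)
  have hlarge : ∀ R, x i R ≠ 0 → Disjoint R A → 2 ≤ #R := fun R hR hRA =>
    (hrec R hR).two_le_card fun ν hν hsys =>
      Finset.disjoint_left.1 hRA hν (Finset.mem_filter.2 ⟨Finset.mem_univ ν, hsys⟩)
  rw [← hxsum i, hsA]
  split_ifs with hA
  · have := min_add_mul_max_le_sum_card_mul (hx0 i) hcap one_le_two
      fun R hR hRA => by exact_mod_cast hlarge R hR hRA
    simpa [Finset.card_eq_zero.1 hA, Finset.sum_nonneg fun R _ => hx0 i R] using this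
  · refine min_add_mul_max_le_sum_card_mul (hx0 i) hcap (by simp) fun R hR hRA => max_le ?_ ?_
    · exact_mod_cast hlarge R hR hRA
    · obtain ⟨ν₀, hν₀⟩ := Finset.card_ne_zero.1 hA
      have := (hrec R hR).le_card_add_one hdperp.2 (Finset.mem_filter.1 hν₀).2
        fun hν₀R => Finset.disjoint_left.1 hRA hν₀R hν₀
      rw [sub_le_iff_le_add]
      exact_mod_cast this

theorem stmt14 {F : Type} [Field F] [Fintype F] [DecidableEq F] {k n : ℕ}
    (hk : 2 ≤ k) (hkn : k < n)
    (G : Matrix (Fin k) (Fin n) F) (hrank : G.rank = k)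
    (hcol : ∀ ν, matCol G ν ≠ 0)
    -- `s i` is the number of systematic nodes for object `i`
    (s : Fin k → ℕ)
    (hs : ∀ i, s i = Nat.card {ν : Fin n // ∃ c : F, c ≠ 0 ∧
      matCol G ν = c • (Pi.single i 1 : Fin k → F)})
    -- `dperp` is the minimum Hamming distance of the dual of the code generated by `G`
    (dperp : ℕ)
    (hdperp : IsLeast {w : ℕ | ∃ x : Fin n → F, x ≠ 0 ∧
      (∀ u : Fin k → F, ∑ ν, x ν * (u ᵥ* G) ν = 0) ∧ w = hammingNorm x} dperp) :
    ∀ lam ∈ SRRG G,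
      ∑ i, (if s i = 0 then 2 * lam i
        else min (s i : ℝ) (lam i) +
          max 2 ((dperp : ℝ) - 1) * max 0 (lam i - (s i : ℝ))) ≤ (n : ℝ) :=
  stmt14_general G s hs dperp hdperp
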